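/- For any two subspaces X and Y of F_q^n (not necessarily of the same dimension), the subspace distance is at least the Hamming distance between their identifying vectors: d_S(X,Y) ≥ d_H(v(X), v(Y)). -/

import Mathlib

/-- `M` is in reduced row echelon form with pivot (leading-one) column of row `i`
given by `piv i`: pivots strictly move right, each leading coefficient is `1`,
it is the first nonzero entry of its row, and it is the only nonzero entry of
its column. -/
def IsRREFWithPivots {F : Type*} [Field F] {k n : ℕ}
    (M : Matrix (Fin k) (Fin n) F) (piv : Fin k → Fin n) : Prop :=
  StrictMono piv ∧
  (∀ i, M i (piv i) = 1) ∧
  (∀ (i : Fin k) (j : Fin n), j < piv i → M i j = 0) ∧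
  (∀ i i' : Fin k, i' ≠ i → M i' (piv i) = 0)

/-- `M` is in reduced row echelon form. -/
def IsRREF {F : Type*} [Field F] {k n : ℕ} (M : Matrix (Fin k) (Fin n) F) : Prop :=
  ∃ piv, IsRREFWithPivots M piv

/-- The identifying (binary) vector associated with pivot columns `piv`:
its ones are exactly in the pivot positions. -/
def idVec {k n : ℕ} (piv : Fin k → Fin n) : Fin n → Bool :=
  fun j => decide (∃ i, piv i = j)

/-- The subspace distance `d_S(X,Y) = dim X + dim Y - 2 dim (X ⊓ Y)`. -/
noncomputable def subDist {F : Type*} [Field F] {n : ℕ} (X Y : Submodule F (Fin n → F)) : ℕ :=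
  Module.finrank F X + Module.finrank F Y - 2 * Module.finrank F ↥(X ⊓ Y)

open Finset Module

/-! The leading index of every nonzero vector in the row space of an RREF matrix is a pivot
column. Hence `dim X = |P|`, `dim Y = |Q|` for the pivot sets `P`, `Q`, and restricting
`X ⊓ Y` to the coordinates `P ∩ Q` is injective (a nonzero vector of `X ⊓ Y` is nonzero at its
leading index, which lies in `P ∩ Q`), so `dim (X ⊓ Y) ≤ |P ∩ Q|`. Then
`d_S(X,Y) ≥ |P| + |Q| - 2|P ∩ Q| = |P Δ Q| = d_H(v(X), v(Y))`. -/

section LeadingIndex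

variable {ι M : Type*} [LinearOrder ι] [Zero M]

def IsLeadingIndex (v : ι → M) (j : ι) : Prop :=
  v j ≠ 0 ∧ ∀ j' < j, v j' = 0

theorem exists_isLeadingIndex [WellFoundedLT ι] {v : ι → M} (hv : v ≠ 0) :
    ∃ j, IsLeadingIndex v j := by
  obtain ⟨j, hj⟩ := Function.ne_iff.mp hv
  obtain ⟨j₀, hj₀, hmin⟩ := wellFounded_lt.has_min {j | v j ≠ 0} ⟨j, hj⟩
  exact ⟨j₀, hj₀, fun j' hj' => by_contra fun hne => hmin j' hne hj'⟩

theorem IsLeadingIndex.unique {v : ι → M} {j j' : ι} (hj : IsLeadingIndex v j)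
    (hj' : IsLeadingIndex v j') : j = j' :=
  le_antisymm (not_lt.mp fun h => hj'.1 (hj.2 j' h)) (not_lt.mp fun h => hj.1 (hj'.2 j h))

end LeadingIndex

namespace IsRREFWithPivots

variable {F : Type*} [Field F] {k n : ℕ} {M : Matrix (Fin k) (Fin n) F} {piv : Fin k → Fin n}

theorem sum_smul_apply_pivot (hM : IsRREFWithPivots M piv) (c : Fin k → F) (i : Fin k) :
    (∑ i', c i' • M i') (piv i) = c i := by
  simp only [Finset.sum_apply, Pi.smul_apply, smul_eq_mul]
  rw [Finset.sum_eq_single_of_mem i (mem_univ i) fun i' _ hne => by rw [hM.2.2.2 i i' hne,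
    mul_zero], hM.2.1 i, mul_one]

theorem linearIndependent (hM : IsRREFWithPivots M piv) : LinearIndependent F M :=
  Fintype.linearIndependent_iff.mpr fun c hc i => by
    rw [← hM.sum_smul_apply_pivot c i, hc, Pi.zero_apply]

theorem finrank_span (hM : IsRREFWithPivots M piv) :
    finrank F (Submodule.span F (Set.range M)) = k := by
  rw [finrank_span_eq_card hM.linearIndependent, Fintype.card_fin]

/-- Left of `piv i`, the rows before `i` do not contribute and the later rows vanish. -/
theorem isLeadingIndex_sum_smul (hM : IsRREFWithPivots M piv) {c : Fin k → F} {i : Fin k}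
    (hi : IsLeadingIndex c i) : IsLeadingIndex (∑ i', c i' • M i') (piv i) := by
  refine ⟨by rw [hM.sum_smul_apply_pivot]; exact hi.1, fun j hj => ?_⟩
  simp only [Finset.sum_apply, Pi.smul_apply, smul_eq_mul]
  refine Finset.sum_eq_zero fun i' _ => ?_
  rcases lt_or_ge i' i with hlt | hge
  · rw [hi.2 i' hlt, zero_mul]
  · rw [hM.2.2.1 i' j (hj.trans_le (hM.1.monotone hge)), mul_zero]

theorem exists_pivot_eq_of_isLeadingIndex (hM : IsRREFWithPivots M piv) {v : Fin n → F}
    (hv : v ∈ Submodule.span F (Set.range M)) {j : Fin n} (hj : IsLeadingIndex v j) :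
    ∃ i, piv i = j := by
  obtain ⟨c, rfl⟩ := (Submodule.mem_span_range_iff_exists_fun F).mp hv
  have hc : c ≠ 0 := by
    rintro rfl
    exact hj.1 (by simp)
  obtain ⟨i, hi⟩ := exists_isLeadingIndex hc
  exact ⟨i, (hM.isLeadingIndex_sum_smul hi).unique hj⟩

end IsRREFWithPivots

theorem finrank_le_card_of_isLeadingIndex_mem {F ι : Type*} [Field F] [LinearOrder ι]
    [WellFoundedLT ι] (W : Submodule F (ι → F)) (S : Finset ι)
    (hS : ∀ w ∈ W, ∀ j, IsLeadingIndex w j → j ∈ S) : finrank F W ≤ #S := by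
  let restrict : W →ₗ[F] (S → F) := (LinearMap.funLeft F F ((↑) : S → ι)).comp W.subtype
  have hinj : Function.Injective restrict := by
    refine (injective_iff_map_eq_zero restrict).mpr fun w hw => ?_
    by_contra hne
    obtain ⟨j, hj⟩ := exists_isLeadingIndex (Subtype.coe_ne_coe.mpr hne)
    exact hj.1 (congrFun hw ⟨j, hS w w.2 j hj⟩)
  simpa using LinearMap.finrank_le_finrank_of_injective hinj

theorem hammingDist_idVec_add {k₁ k₂ n : ℕ} (p : Fin k₁ → Fin n) (q : Fin k₂ → Fin n) :
    hammingDist (idVec p) (idVec q) + 2 * #(univ.image p ∩ univ.image q) =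
      #(univ.image p) + #(univ.image q) := by
  have hdiff : ({j | idVec p j ≠ idVec q j} : Finset (Fin n)) =
      (univ.image p ∪ univ.image q) \ (univ.image p ∩ univ.image q) := by
    ext j
    simp only [idVec, mem_filter, mem_univ, true_and, mem_sdiff, mem_union, mem_inter,
      mem_image, ne_eq, decide_eq_decide]
    tauto
  rw [hammingDist, hdiff, card_sdiff_of_subset inter_subset_union,
    ← card_union_add_card_inter]
  have := card_le_card (inter_subset_union (s := univ.image p) (t := univ.image q))
  omega

theorem hamming_le_subDist_general {F : Type*} [Field F] {n k1 k2 : ℕ}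
    (X Y : Submodule F (Fin n → F))
    (MX : Matrix (Fin k1) (Fin n) F) (pivX : Fin k1 → Fin n)
    (hMX : IsRREFWithPivots MX pivX)
    (hsX : Submodule.span F (Set.range MX) = X)
    (MY : Matrix (Fin k2) (Fin n) F) (pivY : Fin k2 → Fin n)
    (hMY : IsRREFWithPivots MY pivY)
    (hsY : Submodule.span F (Set.range MY) = Y) :
    hammingDist (idVec pivX) (idVec pivY) ≤ subDist X Y := by
  have hX : finrank F X = #(univ.image pivX) := by
    rw [← hsX, hMX.finrank_span, card_image_of_injective _ hMX.1.injective, card_fin]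
  have hY : finrank F Y = #(univ.image pivY) := by
    rw [← hsY, hMY.finrank_span, card_image_of_injective _ hMY.1.injective, card_fin]
  have hXY : finrank F ↥(X ⊓ Y) ≤ #(univ.image pivX ∩ univ.image pivY) :=
    finrank_le_card_of_isLeadingIndex_mem _ _ fun w hw j hj => by
      obtain ⟨iX, hiX⟩ := hMX.exists_pivot_eq_of_isLeadingIndex (hsX ▸ hw.1) hj
      obtain ⟨iY, hiY⟩ := hMY.exists_pivot_eq_of_isLeadingIndex (hsY ▸ hw.2) hj
      exact mem_inter.mpr
        ⟨hiX ▸ mem_image_of_mem _ (mem_univ iX), hiY ▸ mem_image_of_mem _ (mem_univ iY)⟩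
  have hHam := hammingDist_idVec_add pivX pivY
  rw [subDist, hX, hY]
  omega

/-- **Corollary 2 of the paper.** For any two subspaces
`X, Y ⊆ F_q^n` (not necessarily of the same dimension),
`d_S(X,Y) ≥ d_H(v(X), v(Y))`. -/
theorem hamming_le_subDist {F : Type*} [Field F] [Fintype F] {n k1 k2 : ℕ}
    (X Y : Submodule F (Fin n → F))
    (MX : Matrix (Fin k1) (Fin n) F) (pivX : Fin k1 → Fin n)
    (hMX : IsRREFWithPivots MX pivX)
    (hsX : Submodule.span F (Set.range MX) = X)
    (MY : Matrix (Fin k2) (Fin n) F) (pivY : Fin k2 → Fin n)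
    (hMY : IsRREFWithPivots MY pivY)
    (hsY : Submodule.span F (Set.range MY) = Y) :
    hammingDist (idVec pivX) (idVec pivY) ≤ subDist X Y :=
  hamming_le_subDist_general X Y MX pivX hMX hsX MY pivY hMY hsY
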